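/- For every positive integer n, the reduced factor complexity of the regular paperfolding sequence satisfies ρ_f^red(2n) = 4. -/

import Mathlib

/-- The reduction of a word: replace each maximal run of identical characters
by a single character. -/
def red {α : Type*} [DecidableEq α] (w : List α) : List α :=
  w.destutter (· ≠ ·)

/-- The length-`k` factor of the infinite sequence `x` (1-indexed) starting at
position `i`. -/
def factorAt {α : Type*} (x : ℕ → α) (i k : ℕ) : List α :=
  (List.range k).map (fun j => x (i + j))

/-- The reduced factor complexity: the number of length-`n` factors of `x`,
counted up to reduced-equivalence (`red v = red w`). -/
noncomputable def redFactorComplexity {α : Type*} [DecidableEq α]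
    (x : ℕ → α) (n : ℕ) : ℕ :=
  Set.ncard { u : List α | ∃ i ≥ 1, u = red (factorAt x i n) }

/-- The Thue–Morse sequence (1-indexed): `t n` is the parity of the number of
1's in the binary expansion of `n - 1`. -/
def thueMorse (n : ℕ) : Bool :=
  decide ((Nat.digits 2 (n - 1)).sum % 2 = 1)

/-- The number of alternations (occurrences of 01 or 10) in a binary word. -/
def alt (w : List Bool) : ℕ :=
  (List.zipWith (fun a b => a != b) w w.tail).count true

/-- The minimum number of alternations among length-`k` factors of Thue–Morse. -/
noncomputable def tmAltMin (k : ℕ) : ℕ :=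
  sInf { a : ℕ | ∃ i ≥ 1, a = alt (factorAt thueMorse i k) }

/-- The maximum number of alternations among length-`k` factors of Thue–Morse. -/
noncomputable def tmAltMax (k : ℕ) : ℕ :=
  sSup { a : ℕ | ∃ i ≥ 1, a = alt (factorAt thueMorse i k) }

/-- The Thue–Morse morphism `0 → 01`, `1 → 10`. -/
def mu (w : List Bool) : List Bool :=
  w.flatMap (fun b => if b then [true, false] else [false, true])

/-- The regular paperfolding sequence (1-indexed): writing `n = n' * 2^k` with
`n'` odd, `f n = 1` iff `n' ≡ 3 (mod 4)`. -/
def paperfold (n : ℕ) : Bool :=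
  decide ((n / 2 ^ (n.factorization 2)) % 4 = 3)

/-- The reduced abelian complexity: the number of length-`n` factors of `x`,
counted up to the equivalence identifying `v` and `w` whenever `red v` is a
rearrangement of the characters of `red w`. -/
noncomputable def redAbelianComplexity {α : Type*} [DecidableEq α]
    (x : ℕ → α) (n : ℕ) : ℕ :=
  Set.ncard { m : Multiset α | ∃ i ≥ 1, m = ↑(red (factorAt x i n)) }

/-!
A binary word reduces to the alternating word that starts with its first letter and is one
letter longer than the number of its jumps (adjacent unequal letters). In the paperfolding
sequence the odd positions read `0101…`, so `f (2m+1) ≠ f (2m+3)` and exactly one of the steps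
`2m+1 → 2m+2 → 2m+3` is a jump. Hence a factor of length `2n` has `n - 1` or `n` jumps, and its
reduction is determined by its first letter and by this choice; all four combinations occur,
at the positions `2, 4, 6, 12`.
-/

def jump {α : Type*} [DecidableEq α] (x : ℕ → α) (i : ℕ) : ℕ :=
  if x i = x (i + 1) then 0 else 1

lemma jump_le_one {α : Type*} [DecidableEq α] (x : ℕ → α) (i : ℕ) : jump x i ≤ 1 := by
  unfold jump; split <;> omega

lemma red_cons_cons {α : Type*} [DecidableEq α] (a b : α) (l : List α) :
    red (a :: b :: l) = if a = b then red (b :: l) else a :: red (b :: l) := by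
  by_cases h : a = b
  · subst h; simp [red, List.destutter_cons']
  · simp [red, List.destutter_cons', h]

lemma factorAt_succ {α : Type*} (x : ℕ → α) (i k : ℕ) :
    factorAt x i (k + 1) = x i :: factorAt x (i + 1) k := by
  simp only [factorAt, List.range_succ_eq_map, List.map_cons, List.map_map, Function.comp_def,
    Nat.add_zero, Nat.add_assoc, Nat.add_comm 1]

lemma red_factorAt_succ (x : ℕ → Bool) (i k : ℕ) :
    red (factorAt x i (k + 1)) =
      List.iterate not (x i) (1 + ∑ j ∈ Finset.range k, jump x (i + j)) := by
  induction k generalizing i with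
  | zero => simp [factorAt, red]
  | succ k ih =>
    rw [factorAt_succ, factorAt_succ, red_cons_cons, ← factorAt_succ, ih,
      Finset.sum_range_succ', add_zero]
    simp only [Nat.add_assoc, Nat.add_comm 1 _]
    unfold jump
    by_cases h : x i = x (i + 1)
    · simp [h]
    · have hnext : x (i + 1) = !x i := by cases hx : x i <;> simp_all
      simp [hnext, List.iterate]

lemma paperfold_two_mul {k : ℕ} (hk : k ≠ 0) : paperfold (2 * k) = paperfold k := by
  have hfac : (2 * k).factorization 2 = k.factorization 2 + 1 := by
    rw [Nat.factorization_mul two_ne_zero hk, Finsupp.add_apply,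
      Nat.Prime.factorization_self Nat.prime_two, add_comm]
  rw [paperfold, paperfold, hfac, pow_succ, mul_comm _ 2, Nat.mul_div_mul_left _ _ two_pos]

lemma paperfold_two_mul_add_one (k : ℕ) : paperfold (2 * k + 1) = decide (k % 2 = 1) := by
  have hfac : (2 * k + 1).factorization 2 = 0 :=
    Nat.factorization_eq_zero_of_not_dvd (by omega)
  simp only [paperfold, hfac, pow_zero, Nat.div_one, decide_eq_decide]
  omega

lemma jump_add_jump_eq_one {x : ℕ → Bool} {i : ℕ} (h : x i ≠ x (i + 2)) :
    jump x i + jump x (i + 1) = 1 := by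
  unfold jump
  revert h
  cases x i <;> cases x (i + 1) <;> cases x (i + 2) <;> simp

lemma sum_jump_paperfold_two_mul_add_one (m p : ℕ) :
    ∑ j ∈ Finset.range (2 * p), jump paperfold (2 * m + 1 + j) = p := by
  induction p with
  | zero => simp
  | succ p ih =>
    have hpair : paperfold (2 * m + 1 + 2 * p) ≠ paperfold (2 * m + 1 + 2 * p + 2) := by
      rw [show 2 * m + 1 + 2 * p = 2 * (m + p) + 1 by ring,
        show 2 * (m + p) + 1 + 2 = 2 * (m + p + 1) + 1 by ring,
        paperfold_two_mul_add_one, paperfold_two_mul_add_one]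
      simp only [ne_eq, decide_eq_decide]
      omega
    rw [Nat.mul_succ, Finset.sum_range_succ, Finset.sum_range_succ, ih, add_assoc,
      ← add_assoc (2 * m + 1), jump_add_jump_eq_one hpair]

lemma red_factorAt_paperfold_two_mul {m : ℕ} (hm : m ≠ 0) (k : ℕ) :
    red (factorAt paperfold (2 * m) (2 * k + 2)) =
      List.iterate not (paperfold m)
        (k + 1 + if paperfold m = decide (m % 2 = 1) then 0 else 1) := by
  have hsum : ∑ j ∈ Finset.range (2 * k), jump paperfold (2 * m + (j + 1)) = k := by
    simpa only [add_assoc, add_comm 1] using sum_jump_paperfold_two_mul_add_one m k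
  rw [show 2 * k + 2 = 2 * k + 1 + 1 by ring, red_factorAt_succ, Finset.sum_range_succ', hsum,
    add_zero, jump, paperfold_two_mul hm, paperfold_two_mul_add_one]
  congr 1
  ring

lemma red_factorAt_paperfold_two_mul_add_one (m k : ℕ) :
    red (factorAt paperfold (2 * m + 1) (2 * k + 2)) =
      List.iterate not (paperfold (2 * m + 1)) (k + 1 + jump paperfold (2 * m + 1 + 2 * k)) := by
  rw [show 2 * k + 2 = 2 * k + 1 + 1 by ring, red_factorAt_succ, Finset.sum_range_succ,
    sum_jump_paperfold_two_mul_add_one]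
  congr 1
  ring

lemma exists_le_one_red_factorAt_paperfold {i : ℕ} (hi : 1 ≤ i) (k : ℕ) :
    ∃ d ≤ 1, red (factorAt paperfold i (2 * k + 2)) =
      List.iterate not (paperfold i) (k + 1 + d) := by
  obtain ⟨m, rfl | rfl⟩ := Nat.even_or_odd' i
  · have hm : m ≠ 0 := by omega
    rw [red_factorAt_paperfold_two_mul hm, paperfold_two_mul hm]
    exact ⟨_, by split <;> omega, rfl⟩
  · exact ⟨_, jump_le_one _ _, red_factorAt_paperfold_two_mul_add_one m k⟩

lemma exists_red_factorAt_paperfold_eq_iterate (b : Bool) (d : Fin 2) (k : ℕ) :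
    ∃ i ≥ 1, red (factorAt paperfold i (2 * k + 2)) = List.iterate not b (k + 1 + d) := by
  have h1 : paperfold 1 = false := paperfold_two_mul_add_one 0
  have h3 : paperfold 3 = true := paperfold_two_mul_add_one 1
  have h2 : paperfold 2 = false := (paperfold_two_mul one_ne_zero).trans h1
  have h6 : paperfold 6 = true := (paperfold_two_mul three_ne_zero).trans h3
  obtain ⟨m, hm, hb, hd⟩ : ∃ m ≠ 0, paperfold m = b ∧
      (if paperfold m = decide (m % 2 = 1) then 0 else 1) = (d : ℕ) := by
    cases b <;> fin_cases d
    exacts [⟨2, two_ne_zero, h2, by simp [h2]⟩, ⟨1, one_ne_zero, h1, by simp [h1]⟩,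
      ⟨3, three_ne_zero, h3, by simp [h3]⟩, ⟨6, by norm_num, h6, by simp [h6]⟩]
  exact ⟨2 * m, by omega, by rw [red_factorAt_paperfold_two_mul hm, hd, hb]⟩

lemma iterate_not_injective (k : ℕ) :
    Function.Injective fun p : Bool × Fin 2 => List.iterate not p.1 (k + 1 + p.2) := by
  rintro ⟨b, d⟩ ⟨b', d'⟩ h
  simp only [Nat.add_right_comm k 1, List.iterate, List.cons.injEq] at h
  have hd : d = d' := Fin.ext (by simpa using congrArg List.length h.2)
  rw [h.1, hd]

theorem stmt13 (n : ℕ) (hn : 1 ≤ n) :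
    redFactorComplexity paperfold (2 * n) = 4 := by
  obtain ⟨k, rfl⟩ : ∃ k, n = k + 1 := ⟨n - 1, by omega⟩
  have hfactors : { u : List Bool | ∃ i ≥ 1, u = red (factorAt paperfold i (2 * (k + 1))) } =
      Set.range fun p : Bool × Fin 2 => List.iterate not p.1 (k + 1 + p.2) := by
    ext u
    constructor
    · rintro ⟨i, hi, rfl⟩
      obtain ⟨d, hd, h⟩ := exists_le_one_red_factorAt_paperfold hi k
      exact ⟨(paperfold i, ⟨d, by omega⟩), h.symm⟩
    · rintro ⟨⟨b, d⟩, rfl⟩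
      obtain ⟨i, hi, h⟩ := exists_red_factorAt_paperfold_eq_iterate b d k
      exact ⟨i, hi, h.symm⟩
  rw [redFactorComplexity, hfactors, Set.ncard_range_of_injective (iterate_not_injective k)]
  simp
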